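/- Let Q = (x_Q, y_Q) with x_Q > 0 and κ(η) x_Q + y_Q > 0. Assume K₁ < 0 < K₂ and α₁ ≥ α₂ ≥ κ(η). Then ⟨F₁(Q), J F₂(Q)⟩ = (α₁ - α₂)((n-2) x_Q y_Q + y_Q² + η x_Q²) - (α₂ x_Q + y_Q) K₁ x_Q^{q₁-1} + (α₁ x_Q + y_Q) K₂ x_Q^{q₂-1}, and this quantity is strictly positive. (In particular the vector fields F₁ and F₂ are transversal at every point of the region {x > 0, κ(η)x + y > 0}.) -/

import Mathlib

open Real Filter Topology Set

noncomputable section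

/-- κ(η) = ((n-2) - √((n-2)²-4η))/2. -/
def kappa (n : ℕ) (η : ℝ) : ℝ :=
  (((n:ℝ) - 2) - Real.sqrt (((n:ℝ) - 2) ^ 2 - 4 * η)) / 2

/-- The planar vector field F_i(x,y) = (α x + y, -ηx + γ y - K x|x|^{q-2}). -/
def vecF (η K q α γ : ℝ) (P : ℝ × ℝ) : ℝ × ℝ :=
  (α * P.1 + P.2, -η * P.1 + γ * P.2 - K * P.1 * |P.1| ^ (q - 2))

/-- Rotation by π/2: J(a,b) = (-b,a). -/
def rotJ (P : ℝ × ℝ) : ℝ × ℝ := (-P.2, P.1)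

/-- Euclidean scalar product on ℝ². -/
def dot2 (P Q : ℝ × ℝ) : ℝ := P.1 * Q.1 + P.2 * Q.2


/-! The linear parts of `F₁` and `F₂` differ only by `(α₁ - α₂) · Id`, so the cross product of
the fields is `(α₁ - α₂)` times the quadratic form `y² + (n-2)xy + ηx²` plus the two nonlinear
contributions. That form factors as `(y + κx)(y + κ'x)` with `κ ≤ κ'` the roots of
`t² - (n-2)t + η`, so it is positive where `x > 0` and `κx + y > 0`; there also `αᵢx + y > 0`,
and the signs of `K₁`, `K₂` make both nonlinear contributions positive. -/

lemma mul_abs_rpow_sub_two {x : ℝ} (hx : 0 < x) (q : ℝ) : x * |x| ^ (q - 2) = x ^ (q - 1) := by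
  rw [abs_of_pos hx, show q - 1 = 1 + (q - 2) by ring, Real.rpow_add hx, Real.rpow_one]

lemma vecF_of_pos (η K q α γ : ℝ) {x : ℝ} (hx : 0 < x) (y : ℝ) :
    vecF η K q α γ (x, y) = (α * x + y, -η * x + γ * y - K * x ^ (q - 1)) := by
  rw [vecF, mul_assoc K, mul_abs_rpow_sub_two hx]

lemma dot2_rotJ (P Q : ℝ × ℝ) : dot2 P (rotJ Q) = P.2 * Q.1 - P.1 * Q.2 := by
  rw [dot2, rotJ]; ring

theorem dot2_vecF_rotJ_vecF (N η K₁ K₂ q₁ q₂ α₁ α₂ γ₁ γ₂ : ℝ)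
    (hγ₁ : γ₁ = α₁ + 2 - N) (hγ₂ : γ₂ = α₂ + 2 - N) {x : ℝ} (hx : 0 < x) (y : ℝ) :
    dot2 (vecF η K₁ q₁ α₁ γ₁ (x, y)) (rotJ (vecF η K₂ q₂ α₂ γ₂ (x, y))) =
      (α₁ - α₂) * ((N - 2) * x * y + y ^ 2 + η * x ^ 2) -
        (α₂ * x + y) * K₁ * x ^ (q₁ - 1) + (α₁ * x + y) * K₂ * x ^ (q₂ - 1) := by
  rw [dot2_rotJ, vecF_of_pos _ _ _ _ _ hx, vecF_of_pos _ _ _ _ _ hx]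
  subst hγ₁ hγ₂
  ring

theorem quadratic_eq_mul_kappa (n : ℕ) {η : ℝ} (hη : η ≤ ((n : ℝ) - 2) ^ 2 / 4) (x y : ℝ) :
    ((n : ℝ) - 2) * x * y + y ^ 2 + η * x ^ 2 =
      (kappa n η * x + y) * ((kappa n η + √(((n : ℝ) - 2) ^ 2 - 4 * η)) * x + y) := by
  have hs : √(((n : ℝ) - 2) ^ 2 - 4 * η) ^ 2 = ((n : ℝ) - 2) ^ 2 - 4 * η :=
    Real.sq_sqrt (by linarith)
  rw [kappa]
  linear_combination (x ^ 2 / 4) * hs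

theorem quadratic_pos_of_kappa (n : ℕ) {η : ℝ} (hη : η ≤ ((n : ℝ) - 2) ^ 2 / 4) {x y : ℝ}
    (hx : 0 ≤ x) (h : 0 < kappa n η * x + y) :
    0 < ((n : ℝ) - 2) * x * y + y ^ 2 + η * x ^ 2 := by
  rw [quadratic_eq_mul_kappa n hη]
  have hsx : 0 ≤ √(((n : ℝ) - 2) ^ 2 - 4 * η) * x := mul_nonneg (Real.sqrt_nonneg _) hx
  exact mul_pos h (by linarith)

theorem stmt14_general (n : ℕ) (η q₁ q₂ K₁ K₂ α₁ α₂ γ₁ γ₂ : ℝ)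
    (hη : η < ((n:ℝ) - 2) ^ 2 / 4)
    (hγ₁ : γ₁ = α₁ + 2 - (n:ℝ)) (hγ₂ : γ₂ = α₂ + 2 - (n:ℝ))
    (hK : K₁ < 0) (hK' : 0 < K₂)
    (hαord : α₂ ≤ α₁) (hακ : kappa n η ≤ α₂)
    (xQ yQ : ℝ) (hxQ : 0 < xQ) (hQ : 0 < kappa n η * xQ + yQ) :
    dot2 (vecF η K₁ q₁ α₁ γ₁ (xQ, yQ)) (rotJ (vecF η K₂ q₂ α₂ γ₂ (xQ, yQ))) =
      (α₁ - α₂) * (((n:ℝ) - 2) * xQ * yQ + yQ ^ 2 + η * xQ ^ 2) -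
        (α₂ * xQ + yQ) * K₁ * xQ ^ (q₁ - 1) +
        (α₁ * xQ + yQ) * K₂ * xQ ^ (q₂ - 1) ∧
    0 < dot2 (vecF η K₁ q₁ α₁ γ₁ (xQ, yQ)) (rotJ (vecF η K₂ q₂ α₂ γ₂ (xQ, yQ))) := by
  have hcross := dot2_vecF_rotJ_vecF n η K₁ K₂ q₁ q₂ α₁ α₂ γ₁ γ₂ hγ₁ hγ₂ hxQ yQ
  refine ⟨hcross, ?_⟩
  rw [hcross]
  have hlin : 0 ≤ (α₁ - α₂) * (((n:ℝ) - 2) * xQ * yQ + yQ ^ 2 + η * xQ ^ 2) :=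
    mul_nonneg (sub_nonneg.2 hαord) (quadratic_pos_of_kappa n hη.le hxQ.le hQ).le
  have h₂ : 0 < α₂ * xQ + yQ := by linarith [mul_le_mul_of_nonneg_right hακ hxQ.le]
  have h₁ : 0 < α₁ * xQ + yQ := by linarith [mul_le_mul_of_nonneg_right hαord hxQ.le]
  have hK₁ := mul_pos (mul_pos h₂ (neg_pos.2 hK)) (Real.rpow_pos_of_pos hxQ (q₁ - 1))
  have hK₂ := mul_pos (mul_pos h₁ hK') (Real.rpow_pos_of_pos hxQ (q₂ - 1))
  linarith

theorem stmt14 (n : ℕ) (hn : 2 < n) (η q₁ q₂ K₁ K₂ α₁ α₂ γ₁ γ₂ : ℝ)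
    (hη : η < ((n:ℝ) - 2) ^ 2 / 4)
    (hq₁ : 2 < q₁) (hq₂ : 2 < q₂)
    (hα₁ : 0 < α₁) (hα₂ : 0 < α₂)
    (hγ₁ : γ₁ = α₁ + 2 - (n:ℝ)) (hγ₂ : γ₂ = α₂ + 2 - (n:ℝ))
    (hK : K₁ < 0) (hK' : 0 < K₂)
    (hαord : α₂ ≤ α₁) (hακ : kappa n η ≤ α₂)
    (xQ yQ : ℝ) (hxQ : 0 < xQ) (hQ : 0 < kappa n η * xQ + yQ) :
    dot2 (vecF η K₁ q₁ α₁ γ₁ (xQ, yQ)) (rotJ (vecF η K₂ q₂ α₂ γ₂ (xQ, yQ))) =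
      (α₁ - α₂) * (((n:ℝ) - 2) * xQ * yQ + yQ ^ 2 + η * xQ ^ 2) -
        (α₂ * xQ + yQ) * K₁ * xQ ^ (q₁ - 1) +
        (α₁ * xQ + yQ) * K₂ * xQ ^ (q₂ - 1) ∧
    0 < dot2 (vecF η K₁ q₁ α₁ γ₁ (xQ, yQ)) (rotJ (vecF η K₂ q₂ α₂ γ₂ (xQ, yQ))) :=
  stmt14_general n η q₁ q₂ K₁ K₂ α₁ α₂ γ₁ γ₂ hη hγ₁ hγ₂ hK hK' hαord hακ xQ yQ hxQ hQ

end
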